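/- arXiv:2605.19648 — 2 statements merged into one kernel-verified Lean document; each statement's English description precedes it below -/
import Mathlib

section
/- Let f: {0,1}^d → [0,1] be monotone and let i ∈ [d]. Then ∑_{S ∋ i, |S| ≤ d_0} f̂(S)² ≤ (3^{d_0 - 1}/4) · I_i(f)^{3/2} for every positive integer d_0. -/
/-!
Put `g = Δ_i f`, which takes values in `[0,1]` by monotonicity, and `I = E[g]`. Splitting
`f` along coordinate `i` gives `f̂(T ∪ {i}) = ĝ(T)/2` for `i ∉ T`, so the left-hand side is at
most `3^{d₀-1}/4 · W` with `W = ∑_T 3^{-|T|} ĝ(T)² = E[g · T_{1/3} g]`. Bonami's lemma bounds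
`E[(T_{1/3} g)⁴] ≤ W²`, and Hölder's inequality with exponents `4/3` and `4`, together with
`g^{4/3} ≤ g`, gives `W ≤ I^{3/4} W^{1/2}`, that is `W ≤ I^{3/2}`.
-/

open Finset

/-- Expectation of `g` under the uniform measure on `{0,1}^d`. -/
noncomputable def unifE (d : ℕ) (g : (Fin d → Bool) → ℝ) : ℝ :=
  (∑ x : Fin d → Bool, g x) / 2 ^ d

/-- Discrete derivative `Δ_i f (x) = f(x^{i→1}) - f(x^{i→0})`. -/
def disc (d : ℕ) (f : (Fin d → Bool) → ℝ) (i : Fin d) (x : Fin d → Bool) : ℝ :=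
  f (Function.update x i true) - f (Function.update x i false)

/-- Coordinatewise monotone on the hypercube. -/
def BMono (d : ℕ) (f : (Fin d → Bool) → ℝ) : Prop :=
  ∀ x y : Fin d → Bool, (∀ i, x i ≤ y i) → f x ≤ f y

/-- Fourier character `χ_S(x) = ∏_{i∈S} (2 x_i - 1)`. -/
def chi (d : ℕ) (S : Finset (Fin d)) (x : Fin d → Bool) : ℝ :=
  ∏ i ∈ S, (if x i then (1 : ℝ) else -1)

/-- Fourier coefficient `f̂(S) = E[f(X) χ_S(X)]`. -/
noncomputable def fhat (d : ℕ) (f : (Fin d → Bool) → ℝ) (S : Finset (Fin d)) : ℝ :=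
  unifE d (fun x => f x * chi d S x)

section Expectation

variable {d : ℕ}

lemma unifE_mono {u v : (Fin d → Bool) → ℝ} (h : ∀ x, u x ≤ v x) :
    unifE d u ≤ unifE d v :=
  div_le_div_of_nonneg_right (sum_le_sum fun x _ => h x) (by positivity)

lemma unifE_nonneg {u : (Fin d → Bool) → ℝ} (h : ∀ x, 0 ≤ u x) : 0 ≤ unifE d u :=
  div_nonneg (sum_nonneg fun x _ => h x) (by positivity)

lemma unifE_add (u v : (Fin d → Bool) → ℝ) :
    unifE d (fun x => u x + v x) = unifE d u + unifE d v := by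
  rw [unifE, sum_add_distrib, add_div, unifE, unifE]

lemma unifE_const_mul (a : ℝ) (u : (Fin d → Bool) → ℝ) :
    unifE d (fun x => a * u x) = a * unifE d u := by
  rw [unifE, ← mul_sum, mul_div_assoc, unifE]

lemma unifE_sum {κ : Type*} (s : Finset κ) (F : κ → (Fin d → Bool) → ℝ) :
    unifE d (fun x => ∑ T ∈ s, F T x) = ∑ T ∈ s, unifE d (F T) := by
  rw [unifE, sum_comm, sum_div]
  rfl

lemma unifE_const (c : ℝ) : unifE d (fun _ => c) = c := by
  simp [unifE]

lemma unifE_sq_le_mul_of_sq_le_mul {r u v : (Fin d → Bool) → ℝ} (hu : ∀ x, 0 ≤ u x)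
    (hv : ∀ x, 0 ≤ v x) (h : ∀ x, r x ^ 2 ≤ u x * v x) :
    unifE d r ^ 2 ≤ unifE d u * unifE d v := by
  rw [unifE, unifE, unifE, div_pow, div_mul_div_comm, ← sq]
  gcongr
  exact sum_sq_le_sum_mul_sum_of_sq_le_mul _ (fun x _ => hu x) (fun x _ => hv x) fun x _ => h x

lemma unifE_eq_unifE_update (F : (Fin d → Bool) → ℝ) (j : Fin d) :
    unifE d F =
      unifE d (fun x => (F (Function.update x j true) + F (Function.update x j false)) / 2) := by
  let flip (x : Fin d → Bool) := Function.update x j (!x j)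
  have hflip : Function.Involutive flip := fun x => by simp [flip]
  have hpair : ∀ x, F (Function.update x j true) + F (Function.update x j false) =
      F x + F (flip x) := by
    intro x
    have hx := Function.update_eq_self j x
    cases h : x j <;> rw [h] at hx <;> simp [flip, h, hx, add_comm]
  simp only [hpair, add_div, unifE_add]
  rw [unifE, unifE, unifE, ← sum_div, ← sum_div, hflip.bijective.sum_comp F]
  ring

end Expectation

section Bonami

variable {d : ℕ}

lemma chi_update_of_notMem {T : Finset (Fin d)} {j : Fin d} (hj : j ∉ T)
    (x : Fin d → Bool) (b : Bool) : chi d T (Function.update x j b) = chi d T x :=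
  prod_congr rfl fun k hk => by rw [Function.update_of_ne (ne_of_mem_of_not_mem hk hj)]

lemma chi_insert {T : Finset (Fin d)} {j : Fin d} (hj : j ∉ T) (x : Fin d → Bool) :
    chi d (insert j T) x = (if x j then 1 else -1) * chi d T x :=
  prod_insert hj

lemma sum_powerset_insert_mul_chi {K : Finset (Fin d)} {j : Fin d} (hj : j ∉ K)
    (c : Finset (Fin d) → ℝ) (x : Fin d → Bool) :
    ∑ T ∈ (insert j K).powerset, c T * chi d T x =
      ∑ T ∈ K.powerset, c T * chi d T x +
        (if x j then 1 else -1) * ∑ T ∈ K.powerset, c (insert j T) * chi d T x := by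
  rw [sum_powerset_insert hj, mul_sum]
  congr 1
  refine sum_congr rfl fun T hT => ?_
  rw [chi_insert fun hjT => hj (mem_powerset.mp hT hjT)]
  ring

lemma sum_powerset_mul_chi_update_of_notMem {K : Finset (Fin d)} {j : Fin d} (hj : j ∉ K)
    (c : Finset (Fin d) → ℝ) (x : Fin d → Bool) (b : Bool) :
    ∑ T ∈ K.powerset, c T * chi d T (Function.update x j b) =
      ∑ T ∈ K.powerset, c T * chi d T x :=
  sum_congr rfl fun T hT => by
    rw [chi_update_of_notMem fun hjT => hj (mem_powerset.mp hT hjT)]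

/-- Averaging over coordinate `j` kills the odd powers of the sign `±1` in `x j`. -/
lemma unifE_add_sign_mul_pow_four {A B : (Fin d → Bool) → ℝ} (j : Fin d)
    (hA : ∀ x b, A (Function.update x j b) = A x) (hB : ∀ x b, B (Function.update x j b) = B x) :
    unifE d (fun x => (A x + (if x j then 1 else -1) * B x) ^ 4) =
      unifE d (fun x => A x ^ 4) + 6 * unifE d (fun x => A x ^ 2 * B x ^ 2) +
        unifE d (fun x => B x ^ 4) := by
  rw [unifE_eq_unifE_update _ j, ← unifE_const_mul, ← unifE_add, ← unifE_add]
  congr 1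
  funext x
  simp only [hA, hB, Function.update_self]
  simp only [if_true, Bool.false_eq_true, if_false]
  ring

/-- Bonami's lemma. -/
theorem unifE_sum_mul_chi_pow_four_le (K : Finset (Fin d)) (c : Finset (Fin d) → ℝ) :
    unifE d (fun x => (∑ T ∈ K.powerset, c T * chi d T x) ^ 4) ≤
      (∑ T ∈ K.powerset, (3 : ℝ) ^ T.card * c T ^ 2) ^ 2 := by
  induction K using Finset.induction_on generalizing c with
  | empty => simp [chi, unifE_const, ← pow_mul]
  | @insert j K hj ih =>
    set A := fun x => ∑ T ∈ K.powerset, c T * chi d T x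
    set B := fun x => ∑ T ∈ K.powerset, c (insert j T) * chi d T x
    set α := ∑ T ∈ K.powerset, (3 : ℝ) ^ T.card * c T ^ 2
    set β := ∑ T ∈ K.powerset, (3 : ℝ) ^ T.card * c (insert j T) ^ 2
    have hA4 : unifE d (fun x => A x ^ 4) ≤ α ^ 2 := ih c
    have hB4 : unifE d (fun x => B x ^ 4) ≤ β ^ 2 := ih fun T => c (insert j T)
    have hα : 0 ≤ α := sum_nonneg fun T _ => by positivity
    have hβ : 0 ≤ β := sum_nonneg fun T _ => by positivity
    have hAB : unifE d (fun x => A x ^ 2 * B x ^ 2) ≤ α * β := by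
      refine (abs_le_of_sq_le_sq' ?_ (mul_nonneg hα hβ)).2
      calc unifE d (fun x => A x ^ 2 * B x ^ 2) ^ 2
          ≤ unifE d (fun x => A x ^ 4) * unifE d (fun x => B x ^ 4) :=
            unifE_sq_le_mul_of_sq_le_mul (fun x => by positivity) (fun x => by positivity)
              fun x => le_of_eq (by ring)
        _ ≤ (α * β) ^ 2 := by
            rw [mul_pow]
            exact mul_le_mul hA4 hB4 (unifE_nonneg fun x => by positivity) (sq_nonneg α)
    have hRHS : ∑ T ∈ (insert j K).powerset, (3 : ℝ) ^ T.card * c T ^ 2 = α + 3 * β := by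
      rw [sum_powerset_insert hj, mul_sum]
      congr 1
      refine sum_congr rfl fun T hT => ?_
      rw [card_insert_of_notMem fun hjT => hj (mem_powerset.mp hT hjT), pow_succ]
      ring
    simp only [sum_powerset_insert_mul_chi hj, hRHS]
    rw [unifE_add_sign_mul_pow_four j (sum_powerset_mul_chi_update_of_notMem hj _)
      (sum_powerset_mul_chi_update_of_notMem hj _)]
    nlinarith

end Bonami

/-- The Bonami–Beckner noise operator `T_ρ`. -/
noncomputable def noiseOp (d : ℕ) (ρ : ℝ) (g : (Fin d → Bool) → ℝ) (x : Fin d → Bool) : ℝ :=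
  ∑ T : Finset (Fin d), ρ ^ T.card * fhat d g T * chi d T x

/-- The noise stability `Stab_ρ g`, which equals `‖T_{√ρ} g‖₂²` by Parseval. -/
noncomputable def noiseStab (d : ℕ) (ρ : ℝ) (g : (Fin d → Bool) → ℝ) : ℝ :=
  ∑ T : Finset (Fin d), ρ ^ T.card * fhat d g T ^ 2

section Noise

variable {d : ℕ}

lemma unifE_mul_noiseOp (ρ : ℝ) (g : (Fin d → Bool) → ℝ) :
    unifE d (fun x => g x * noiseOp d ρ g x) = noiseStab d ρ g := by
  simp only [noiseOp, mul_sum]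
  rw [unifE_sum]
  refine sum_congr rfl fun T _ => ?_
  rw [show (fun x => g x * (ρ ^ T.card * fhat d g T * chi d T x)) =
      fun x => ρ ^ T.card * fhat d g T * (g x * chi d T x) by funext x; ring,
    unifE_const_mul, fhat, sq, mul_assoc]

lemma unifE_noiseOp_pow_four_le (ρ : ℝ) (g : (Fin d → Bool) → ℝ) :
    unifE d (fun x => noiseOp d ρ g x ^ 4) ≤ noiseStab d (3 * ρ ^ 2) g ^ 2 := by
  convert unifE_sum_mul_chi_pow_four_le univ (fun T => ρ ^ T.card * fhat d g T) using 3
  · simp [noiseOp]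
  · simp only [noiseStab, powerset_univ]
    refine sum_congr rfl fun T _ => ?_
    ring

/-- Hölder's inequality with exponents `4/3` and `4`, combined with `g^{4/3} ≤ g`. -/
lemma unifE_mul_pow_four_le {g : (Fin d → Bool) → ℝ} (hg : ∀ x, g x ∈ Set.Icc (0 : ℝ) 1)
    (h : (Fin d → Bool) → ℝ) :
    unifE d (fun x => g x * h x) ^ 4 ≤ unifE d g ^ 3 * unifE d (fun x => h x ^ 4) := by
  have hg0 : ∀ x, 0 ≤ g x := fun x => (hg x).1
  have hCS₁ : unifE d (fun x => g x * h x) ^ 2 ≤ unifE d g * unifE d (fun x => g x * h x ^ 2) :=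
    unifE_sq_le_mul_of_sq_le_mul hg0 (fun x => mul_nonneg (hg0 x) (sq_nonneg _))
      fun x => le_of_eq (by ring)
  have hCS₂ : unifE d (fun x => g x * h x ^ 2) ^ 2 ≤
      unifE d (fun x => g x ^ 2) * unifE d (fun x => h x ^ 4) :=
    unifE_sq_le_mul_of_sq_le_mul (fun x => sq_nonneg _) (fun x => by positivity)
      fun x => le_of_eq (by ring)
  have hsq : unifE d (fun x => g x ^ 2) ≤ unifE d g :=
    unifE_mono fun x => by nlinarith [(hg x).1, (hg x).2]
  calc unifE d (fun x => g x * h x) ^ 4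
      = (unifE d (fun x => g x * h x) ^ 2) ^ 2 := by ring
    _ ≤ (unifE d g * unifE d (fun x => g x * h x ^ 2)) ^ 2 :=
        pow_le_pow_left₀ (sq_nonneg _) hCS₁ 2
    _ = unifE d g ^ 2 * unifE d (fun x => g x * h x ^ 2) ^ 2 := mul_pow _ _ _
    _ ≤ unifE d g ^ 2 * (unifE d g * unifE d (fun x => h x ^ 4)) := by
        gcongr
        exact hCS₂.trans (mul_le_mul_of_nonneg_right hsq (unifE_nonneg fun x => by positivity))
    _ = unifE d g ^ 3 * unifE d (fun x => h x ^ 4) := by ring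

theorem noiseStab_one_third_le {g : (Fin d → Bool) → ℝ} (hg : ∀ x, g x ∈ Set.Icc (0 : ℝ) 1) :
    noiseStab d (1 / 3) g ≤ unifE d g ^ ((3 : ℝ) / 2) := by
  set W := noiseStab d (1 / 3) g
  have hW : 0 ≤ W := sum_nonneg fun T _ => by positivity
  have hE : 0 ≤ unifE d g := unifE_nonneg fun x => (hg x).1
  have h4 : W ^ 2 * W ^ 2 ≤ unifE d g ^ 3 * W ^ 2 := by
    have hT := unifE_noiseOp_pow_four_le (d := d) (1 / 3) g
    rw [show (3 : ℝ) * (1 / 3) ^ 2 = 1 / 3 by norm_num] at hT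
    calc W ^ 2 * W ^ 2 = unifE d (fun x => g x * noiseOp d (1 / 3) g x) ^ 4 := by
          rw [unifE_mul_noiseOp]; ring
      _ ≤ unifE d g ^ 3 * unifE d (fun x => noiseOp d (1 / 3) g x ^ 4) :=
          unifE_mul_pow_four_le hg _
      _ ≤ unifE d g ^ 3 * W ^ 2 := by gcongr
  have hW2 : W ^ 2 ≤ unifE d g ^ 3 := by
    rcases hW.eq_or_lt with hW0 | hWpos
    · rw [← hW0, zero_pow two_ne_zero]
      positivity
    · exact le_of_mul_le_mul_right h4 (by positivity)
  rwa [← pow_le_pow_iff_left₀ hW (by positivity) two_ne_zero, ← Real.rpow_mul_natCast hE,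
    show (3 : ℝ) / 2 * (2 : ℕ) = (3 : ℕ) by norm_num, Real.rpow_natCast]

end Noise

section Influence

variable {d : ℕ}

lemma disc_mem_Icc {f : (Fin d → Bool) → ℝ} (hf : ∀ x, f x ∈ Set.Icc (0 : ℝ) 1)
    (hmono : BMono d f) (i : Fin d) (x : Fin d → Bool) :
    disc d f i x ∈ Set.Icc (0 : ℝ) 1 := by
  have hle : f (Function.update x i false) ≤ f (Function.update x i true) := by
    refine hmono _ _ fun k => ?_
    rcases eq_or_ne k i with rfl | hk
    · simp
    · simp [Function.update_of_ne hk]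
  refine ⟨sub_nonneg.mpr hle, ?_⟩
  rw [disc]
  linarith [(hf (Function.update x i true)).2, (hf (Function.update x i false)).1]

lemma fhat_insert_of_notMem (f : (Fin d → Bool) → ℝ) {i : Fin d} {T : Finset (Fin d)}
    (hi : i ∉ T) : fhat d f (insert i T) = fhat d (disc d f i) T / 2 := by
  rw [fhat, unifE_eq_unifE_update _ i, fhat, div_eq_mul_inv, mul_comm, ← unifE_const_mul]
  congr 1
  funext x
  simp only [chi_insert hi, chi_update_of_notMem hi, Function.update_self, disc]
  simp only [if_true, Bool.false_eq_true, if_false]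
  ring

theorem sum_fhat_sq_le_noiseStab_disc (f : (Fin d → Bool) → ℝ) (i : Fin d) (d0 : ℕ) :
    ∑ S ∈ univ.filter (fun S : Finset (Fin d) => i ∈ S ∧ S.card ≤ d0), fhat d f S ^ 2 ≤
      (3 : ℝ) ^ (d0 - 1) / 4 * noiseStab d (1 / 3) (disc d f i) := by
  set 𝒮 := univ.filter (fun S : Finset (Fin d) => i ∈ S ∧ S.card ≤ d0)
  set F := fun T : Finset (Fin d) => (3 : ℝ) ^ (d0 - 1) / 4 *
    ((1 / 3 : ℝ) ^ T.card * fhat d (disc d f i) T ^ 2)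
  have hterm : ∀ S ∈ 𝒮, fhat d f S ^ 2 ≤ F (S.erase i) := by
    intro S hS
    obtain ⟨hiS, hcard⟩ := (mem_filter.mp hS).2
    have hcard' : (S.erase i).card ≤ d0 - 1 := by
      rw [card_erase_of_mem hiS]; omega
    have hpow : (1 : ℝ) ≤ 3 ^ (d0 - 1) * (1 / 3) ^ (S.erase i).card := by
      rw [one_div_pow, mul_one_div, le_div_iff₀ (by positivity), one_mul]
      exact pow_le_pow_right₀ (by norm_num) hcard'
    rw [← insert_erase hiS, fhat_insert_of_notMem f (notMem_erase i S), erase_insert_eq_erase,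
      erase_idem]
    simp only [F]
    nlinarith [mul_le_mul_of_nonneg_right hpow (sq_nonneg (fhat d (disc d f i) (S.erase i)))]
  have hinj : Set.InjOn (fun S : Finset (Fin d) => S.erase i) 𝒮 := fun S hS S' hS' h => by
    rw [← insert_erase (mem_filter.mp hS).2.1, ← insert_erase (mem_filter.mp hS').2.1]
    exact congrArg (insert i) h
  calc ∑ S ∈ 𝒮, fhat d f S ^ 2
      ≤ ∑ S ∈ 𝒮, F (S.erase i) := sum_le_sum hterm
    _ = ∑ T ∈ 𝒮.image (fun S => S.erase i), F T := (sum_image hinj).symm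
    _ ≤ ∑ T, F T := sum_le_sum_of_subset_of_nonneg (subset_univ _) fun T _ _ => by positivity
    _ = (3 : ℝ) ^ (d0 - 1) / 4 * noiseStab d (1 / 3) (disc d f i) := by rw [← mul_sum]; rfl

end Influence

theorem stmt11_general (d : ℕ) (f : (Fin d → Bool) → ℝ)
    (hf : ∀ x, f x ∈ Set.Icc (0 : ℝ) 1) (hmono : BMono d f)
    (i : Fin d) (d0 : ℕ) :
    (∑ S ∈ Finset.univ.filter (fun S : Finset (Fin d) => i ∈ S ∧ S.card ≤ d0),
        (fhat d f S) ^ 2) ≤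
      ((3 : ℝ) ^ (d0 - 1) / 4) * (unifE d (fun x => disc d f i x)) ^ ((3 : ℝ) / 2) :=
  (sum_fhat_sq_le_noiseStab_disc f i d0).trans <| by
    gcongr
    exact noiseStab_one_third_le (disc_mem_Icc hf hmono i)

theorem stmt11 (d : ℕ) (f : (Fin d → Bool) → ℝ)
    (hf : ∀ x, f x ∈ Set.Icc (0 : ℝ) 1) (hmono : BMono d f)
    (i : Fin d) (d0 : ℕ) (hd0 : 1 ≤ d0) :
    (∑ S ∈ Finset.univ.filter (fun S : Finset (Fin d) => i ∈ S ∧ S.card ≤ d0),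
        (fhat d f S) ^ 2) ≤
      ((3 : ℝ) ^ (d0 - 1) / 4) * (unifE d (fun x => disc d f i x)) ^ ((3 : ℝ) / 2) :=
  stmt11_general d f hf hmono i d0
end

section
/- In the middle-layer construction, for every coordinate i ∈ S_0 the L1-influence satisfies I_i(f_ω) ≤ β · binom(s, m) / 2^{s-1}, and I_i(f_ω) = 0 for i ∉ S_0; hence the total L1-influence satisfies I(f_ω) ≤ β · s · binom(s, m) / 2^{s-1}. -/
open Finset

/-- Restriction of `x : {0,1}^d` to the coordinates in `S0`. -/
def restr (d : ℕ) (S0 : Finset (Fin d)) (x : Fin d → Bool) : {i // i ∈ S0} → Bool :=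
  fun i => x i.1

/-- Hamming weight of a point of `{0,1}^{S0}`. -/
def wt (d : ℕ) (S0 : Finset (Fin d)) (z : {i // i ∈ S0} → Bool) : ℕ :=
  (Finset.univ.filter (fun i : {i // i ∈ S0} => z i = true)).card

/-- The middle-layer function `f_ω`. -/
noncomputable def fom (d : ℕ) (S0 : Finset (Fin d)) (β : ℝ) (m : ℕ)
    (ω : ({i // i ∈ S0} → Bool) → Bool) (x : Fin d → Bool) : ℝ :=
  if wt d S0 (restr d S0 x) < m then 0
  else if wt d S0 (restr d S0 x) = m then β * (if ω (restr d S0 x) then 1 else 0)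
  else β

/-! Flipping a coordinate `i ∈ S0` from `0` to `1` raises the weight on `S0` by one, and `f_ω`
vanishes below the middle layer, equals `β` above it and lies in `[0, β]` on it. Hence
`Δ_i f_ω(x) ≤ β · #{b | x^{i→b} is in the middle layer}`. Summing over `x` counts every point of
the middle layer twice, and that layer has `binom(s, m) · 2^(d-s)` points, which gives
`I_i(f_ω) ≤ β · binom(s, m) / 2^(s-1)`. For `i ∉ S0`, `f_ω` does not depend on `x_i`. -/

theorem Fintype.sum_sum_update {ι α M : Type*} [Fintype ι] [DecidableEq ι] [Fintype α]
    [AddCommMonoid M] (g : (ι → α) → M) (i : ι) :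
    ∑ x : ι → α, ∑ a : α, g (Function.update x i a) = Fintype.card α • ∑ x, g x := by
  let e : Equiv.Perm ((ι → α) × α) :=
    Function.Involutive.toPerm (fun p => (Function.update p.1 i p.2, p.1 i)) fun p => by simp
  rw [← Fintype.sum_prod_type', ← Equiv.sum_comp e]
  simp [e, Function.Involutive.toPerm, Fintype.sum_prod_type, Finset.smul_sum]

theorem Fintype.sum_update_true_add_update_false {ι M : Type*} [Fintype ι] [DecidableEq ι]
    [AddCommMonoid M] (g : (ι → Bool) → M) (i : ι) :
    ∑ x : ι → Bool, (g (Function.update x i true) + g (Function.update x i false))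
      = 2 • ∑ x, g x := by
  simpa using Fintype.sum_sum_update g i

theorem Fintype.sum_comp_restrict_finset {ι α M : Type*} [Fintype ι] [DecidableEq ι]
    [Fintype α] [AddCommMonoid M] (s : Finset ι) (F : (s → α) → M) :
    ∑ x : ι → α, F (fun i => x i) = Fintype.card α ^ (Fintype.card ι - #s) • ∑ z, F z := by
  let e := Equiv.piEquivPiSubtypeProd (· ∈ s) fun _ => α
  have h : ∀ z w, (fun i : s => e.symm (z, w) i) = z := fun z w => by
    funext i; simp [e, Equiv.piEquivPiSubtypeProd, i.2]
  rw [← e.symm.sum_comp, Fintype.sum_prod_type]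
  simp [h, Finset.smul_sum, Fintype.card_subtype_compl]

theorem Fintype.card_filter_card_filter_eq {α : Type*} [Fintype α] [DecidableEq α] (m : ℕ) :
    #{z : α → Bool | #{a | z a = true} = m} = (Fintype.card α).choose m := by
  rw [← Finset.card_univ, ← Finset.card_powersetCard]
  refine Finset.card_nbij' (fun z => ({a | z a = true} : Finset α)) (fun S a => decide (a ∈ S))
    ?_ ?_ ?_ ?_
  all_goals intro _ _; simp_all [Finset.mem_powersetCard]

theorem Finset.card_filter_update_true {α : Type*} [Fintype α] [DecidableEq α] (z : α → Bool)
    (k : α) :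
    #{a | Function.update z k true a = true} = #{a | Function.update z k false a = true} + 1 := by
  rw [← Finset.card_insert_of_notMem (s := {a | Function.update z k false a = true}) (a := k)
    (by simp)]
  congr 1
  ext a
  by_cases h : a = k <;> simp [h]

section MiddleLayer

variable {d : ℕ} {S0 : Finset (Fin d)}

theorem restr_update_of_notMem {i : Fin d} (hi : i ∉ S0) (x : Fin d → Bool) (b : Bool) :
    restr d S0 (Function.update x i b) = restr d S0 x := by
  funext j
  exact Function.update_of_ne (fun h : (j : Fin d) = i => hi (h ▸ j.2)) _ _

theorem restr_update_of_mem {i : Fin d} (hi : i ∈ S0) (x : Fin d → Bool) (b : Bool) :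
    restr d S0 (Function.update x i b) = Function.update (restr d S0 x) ⟨i, hi⟩ b := by
  funext j
  simp [restr, Function.update_apply, Subtype.ext_iff]

theorem wt_restr_update_true {i : Fin d} (hi : i ∈ S0) (x : Fin d → Bool) :
    wt d S0 (restr d S0 (Function.update x i true))
      = wt d S0 (restr d S0 (Function.update x i false)) + 1 := by
  simp only [wt, restr_update_of_mem hi]
  exact Finset.card_filter_update_true _ _

theorem sum_ite_wt_restr_eq (m : ℕ) :
    ∑ x : Fin d → Bool, (if wt d S0 (restr d S0 x) = m then (1 : ℝ) else 0)
      = (#S0).choose m * 2 ^ (d - #S0) := by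
  have hlayer : #{z | wt d S0 z = m} = (#S0).choose m :=
    (Fintype.card_filter_card_filter_eq m).trans (by rw [Fintype.card_coe])
  refine (Fintype.sum_comp_restrict_finset S0
    fun z => if wt d S0 z = m then (1 : ℝ) else 0).trans ?_
  rw [Finset.sum_boole, hlayer]
  simp [mul_comm]

variable {β : ℝ} {m : ℕ} {ω : ({i // i ∈ S0} → Bool) → Bool}

theorem fom_nonneg (hβ : 0 ≤ β) (x : Fin d → Bool) : 0 ≤ fom d S0 β m ω x := by
  unfold fom; split_ifs <;> positivity

theorem fom_le (hβ : 0 ≤ β) (x : Fin d → Bool) : fom d S0 β m ω x ≤ β := by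
  unfold fom; split_ifs <;> simp [hβ]

theorem fom_sub_fom_le (hβ : 0 ≤ β) {x y : Fin d → Bool}
    (hxy : wt d S0 (restr d S0 y) = wt d S0 (restr d S0 x) + 1) :
    fom d S0 β m ω y - fom d S0 β m ω x
      ≤ β * ((if wt d S0 (restr d S0 y) = m then 1 else 0)
          + (if wt d S0 (restr d S0 x) = m then 1 else 0)) := by
  have hy := fom_le (m := m) (ω := ω) hβ y
  have hx := fom_nonneg (m := m) (ω := ω) hβ x
  by_cases hym : wt d S0 (restr d S0 y) = m
  · rw [if_pos hym, if_neg (by omega), add_zero, mul_one]; linarith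
  by_cases hxm : wt d S0 (restr d S0 x) = m
  · rw [if_neg hym, if_pos hxm, zero_add, mul_one]; linarith
  suffices fom d S0 β m ω y = fom d S0 β m ω x by simp [this, hxm, hym]
  unfold fom
  split_ifs <;> first | rfl | omega

theorem disc_fom_of_notMem {i : Fin d} (hi : i ∉ S0) (x : Fin d → Bool) :
    disc d (fom d S0 β m ω) i x = 0 := by
  simp [disc, fom, restr_update_of_notMem hi]

theorem unifE_disc_fom_le (hβ : 0 ≤ β) {i : Fin d} (hi : i ∈ S0) :
    unifE d (disc d (fom d S0 β m ω) i) ≤ β * (#S0).choose m / 2 ^ (#S0 - 1) := by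
  have hs : 1 ≤ #S0 := Finset.card_pos.mpr ⟨i, hi⟩
  have hsd : #S0 ≤ d := by simpa using Finset.card_le_univ S0
  have hsum : ∑ x, disc d (fom d S0 β m ω) i x ≤ β * (2 * ((#S0).choose m * 2 ^ (d - #S0))) :=
    calc ∑ x, disc d (fom d S0 β m ω) i x
        ≤ ∑ x, β * ((if wt d S0 (restr d S0 (Function.update x i true)) = m then 1 else 0)
            + (if wt d S0 (restr d S0 (Function.update x i false)) = m then 1 else 0)) :=
          Finset.sum_le_sum fun x _ => fom_sub_fom_le hβ (wt_restr_update_true hi x)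
      _ = β * (2 * ((#S0).choose m * 2 ^ (d - #S0))) := by
          rw [← Finset.mul_sum, Fintype.sum_update_true_add_update_false
            (fun x => if wt d S0 (restr d S0 x) = m then (1 : ℝ) else 0), sum_ite_wt_restr_eq,
            nsmul_eq_mul, Nat.cast_ofNat]
  have hpow : (2 : ℝ) ^ d = 2 * (2 ^ (d - #S0) * 2 ^ (#S0 - 1)) := by
    rw [← pow_add, ← pow_succ']; congr 1; omega
  calc unifE d (disc d (fom d S0 β m ω) i)
      ≤ β * (2 * ((#S0).choose m * 2 ^ (d - #S0))) / 2 ^ d := by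
        unfold unifE; gcongr
    _ = β * (#S0).choose m / 2 ^ (#S0 - 1) := by
        rw [hpow]; field_simp

end MiddleLayer

theorem stmt17_general (d s : ℕ) (S0 : Finset (Fin d)) (β : ℝ)
    (ω : ({i // i ∈ S0} → Bool) → Bool)
    (hcard : S0.card = s) (hβ : β ∈ Set.Icc (0 : ℝ) 1) :
    (∀ i ∈ S0, unifE d (fun x => disc d (fom d S0 β (s / 2) ω) i x) ≤
        β * (s.choose (s / 2)) / 2 ^ (s - 1)) ∧
    (∀ i ∉ S0, unifE d (fun x => disc d (fom d S0 β (s / 2) ω) i x) = 0) ∧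
    (∑ i : Fin d, unifE d (fun x => disc d (fom d S0 β (s / 2) ω) i x)) ≤
      β * s * (s.choose (s / 2)) / 2 ^ (s - 1) := by
  subst hcard
  have hout : ∀ i ∉ S0, unifE d (disc d (fom d S0 β (#S0 / 2) ω) i) = 0 := fun i hi => by
    simp [unifE, disc_fom_of_notMem hi]
  refine ⟨fun i hi => unifE_disc_fom_le hβ.1 hi, hout, ?_⟩
  rw [← Finset.sum_subset (Finset.subset_univ S0) fun i _ hi => hout i hi]
  calc ∑ i ∈ S0, unifE d (disc d (fom d S0 β (#S0 / 2) ω) i)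
      ≤ ∑ _i ∈ S0, β * (#S0).choose (#S0 / 2) / 2 ^ (#S0 - 1) :=
        Finset.sum_le_sum fun i hi => unifE_disc_fom_le hβ.1 hi
    _ = β * #S0 * (#S0).choose (#S0 / 2) / 2 ^ (#S0 - 1) := by
        rw [Finset.sum_const, nsmul_eq_mul]; ring

theorem stmt17 (d s : ℕ) (S0 : Finset (Fin d)) (β : ℝ)
    (ω : ({i // i ∈ S0} → Bool) → Bool)
    (hs : 2 ≤ s) (hcard : S0.card = s) (hβ : β ∈ Set.Icc (0 : ℝ) 1) :
    (∀ i ∈ S0, unifE d (fun x => disc d (fom d S0 β (s / 2) ω) i x) ≤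
        β * (s.choose (s / 2)) / 2 ^ (s - 1)) ∧
    (∀ i ∉ S0, unifE d (fun x => disc d (fom d S0 β (s / 2) ω) i x) = 0) ∧
    (∑ i : Fin d, unifE d (fun x => disc d (fom d S0 β (s / 2) ω) i x)) ≤
      β * s * (s.choose (s / 2)) / 2 ^ (s - 1) :=
  stmt17_general d s S0 β ω hcard hβ
end
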